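/- arXiv:2009.04379 — 2 statements merged into one kernel-verified Lean document; each statement's English description precedes it below -/
import Mathlib

section
/- For every natural number n, (-1)^n · W_n(-1) = f_n^{(4)}, where W_n(x) = ∑_{k=0}^n C(n,k)·C(n+k,k)·C(2k,k)·C(2(n-k),n-k)·x^k and f_n^{(4)} = ∑_{k=0}^n C(n,k)^4. -/
/-!
Both sides satisfy the recurrence `p u (n + 2) = q u (n + 1) + r u n` with `p = (n + 2)^3`,
`q = 2 (2n + 3) (3n^2 + 9n + 7)`, `r = 4 (n + 1) (4n + 3) (4n + 5)`
and agree at `n = 0, 1`. For each summand `F n k` the recurrence comes from creative telescoping: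
Zeilberger's algorithm produces a certificate `G n k`, a rational multiple of `F (n + 2) k`, with
`p F (n + 2) k - q F (n + 1) k - r F n k = G n (k + 1) - G n k`, which is checked by expressing
`F (n + 1) k`, `F n k` and `F (n + 2) (k + 1)` through `F (n + 2) k` via the first-order shift
relations of the hypergeometric term `F`. Summing over `k` telescopes.
-/

open Finset

section Recurrence

variable {R : Type*} [CommRing R]

theorem sum_range_eq_of_eq_zero_of_lt {F : ℕ → R} {n N : ℕ} (hN : n < N)
    (hF : ∀ k, n < k → F k = 0) :
    ∑ k ∈ range N, F k = ∑ k ∈ range (n + 1), F k := by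
  refine (sum_subset (range_subset_range.2 hN) fun k hkN hkn => hF k ?_).symm
  simp only [mem_range] at hkN hkn
  omega

theorem sum_recurrence_of_telescoping (F : ℕ → ℕ → R) (G : ℕ → R) (p q r : R) (n : ℕ)
    (hF : ∀ m k, m < k → F m k = 0) (hG₀ : G 0 = 0) (hG : G (n + 3) = 0)
    (h : ∀ k, p * F (n + 2) k - q * F (n + 1) k - r * F n k = G (k + 1) - G k) :
    p * ∑ k ∈ range (n + 3), F (n + 2) k =
      q * ∑ k ∈ range (n + 2), F (n + 1) k + r * ∑ k ∈ range (n + 1), F n k := by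
  have htel := sum_range_sub G (n + 3)
  rw [hG, hG₀, sub_zero, ← sum_congr rfl fun k _ => h k, sum_sub_distrib, sum_sub_distrib,
    ← mul_sum, ← mul_sum, ← mul_sum, sum_range_eq_of_eq_zero_of_lt (by omega) (hF (n + 1)),
    sum_range_eq_of_eq_zero_of_lt (by omega) (hF n)] at htel
  linear_combination htel

theorem eq_of_recurrence [IsDomain R] {a b : ℕ → R} (p q r : ℕ → R) (hp : ∀ n, p n ≠ 0)
    (ha : ∀ n, p n * a (n + 2) = q n * a (n + 1) + r n * a n)
    (hb : ∀ n, p n * b (n + 2) = q n * b (n + 1) + r n * b n)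
    (h₀ : a 0 = b 0) (h₁ : a 1 = b 1) : a = b := by
  funext n
  induction n using Nat.twoStepInduction with
  | zero => exact h₀
  | one => exact h₁
  | more n ih₀ ih₁ => exact mul_left_cancel₀ (hp n) (by rw [ha, hb, ih₀, ih₁])

theorem cast_choose_succ_mul_sub (n k : ℕ) :
    ((n + 1).choose k : R) * (n + 1 - k) = n.choose k * (n + 1) := by
  rcases le_or_gt k (n + 1) with hk | hk
  · have := congrArg (Nat.cast (R := R)) (Nat.choose_mul_succ_eq n k)
    push_cast [Nat.cast_sub hk] at this
    exact this.symm
  · simp [Nat.choose_eq_zero_of_lt hk, Nat.choose_eq_zero_of_lt (by omega : n < k)]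

theorem cast_choose_succ_right_mul (n k : ℕ) :
    (n.choose (k + 1) : R) * (k + 1) = n.choose k * (n - k) := by
  rcases le_or_gt k n with hk | hk
  · have := congrArg (Nat.cast (R := R)) (Nat.choose_succ_right_eq n k)
    push_cast [Nat.cast_sub hk] at this
    exact this
  · simp [Nat.choose_eq_zero_of_lt hk, Nat.choose_eq_zero_of_lt (by omega : n < k + 1)]

end Recurrence

def franelTerm (n k : ℕ) : ℚ := (n.choose k : ℚ) ^ 4

theorem franelTerm_eq_zero_of_lt {n k : ℕ} (h : n < k) : franelTerm n k = 0 := by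
  simp [franelTerm, Nat.choose_eq_zero_of_lt h]

theorem franelTerm_succ_left (n k : ℕ) :
    franelTerm (n + 1) k * (n + 1 - k) ^ 4 = franelTerm n k * (n + 1) ^ 4 := by
  simp only [franelTerm, ← mul_pow, cast_choose_succ_mul_sub]

theorem franelTerm_succ_right (n k : ℕ) :
    franelTerm n (k + 1) * (k + 1) ^ 4 = franelTerm n k * (n - k) ^ 4 := by
  simp only [franelTerm, ← mul_pow, cast_choose_succ_right_mul]

noncomputable def franelCert (n k : ℕ) : ℚ :=
  let x : ℚ := n
  let y : ℚ := k
  (y ^ 4 * -(1080 + 5380 * x + 11330 * x ^ 2 + 13075 * x ^ 3 + 8930 * x ^ 4 + 3610 * x ^ 5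
      + 800 * x ^ 6 + 75 * x ^ 7)
    + y ^ 5 * (2256 + 9776 * x + 17412 * x ^ 2 + 16312 * x ^ 3 + 8476 * x ^ 4 + 2316 * x ^ 5
      + 260 * x ^ 6)
    + y ^ 6 * -(1980 + 7302 * x + 10620 * x ^ 2 + 7612 * x ^ 3 + 2688 * x ^ 4 + 374 * x ^ 5)
    + y ^ 7 * (900 + 2744 * x + 3088 * x ^ 2 + 1520 * x ^ 3 + 276 * x ^ 4)
    + y ^ 8 * -(210 + 508 * x + 402 * x ^ 2 + 104 * x ^ 3)
    + y ^ 9 * (20 + 36 * x + 16 * x ^ 2))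
  * franelTerm (n + 2) k / ((x + 1) ^ 4 * (x + 2) ^ 4)

theorem franelTerm_telescoping (n k : ℕ) :
    ((n : ℚ) + 2) ^ 3 * franelTerm (n + 2) k
      - 2 * (2 * n + 3) * (3 * n ^ 2 + 9 * n + 7) * franelTerm (n + 1) k
      - 4 * (n + 1) * (4 * n + 3) * (4 * n + 5) * franelTerm n k
    = franelCert n (k + 1) - franelCert n k := by
  have h₁ : franelTerm (n + 1) k = franelTerm (n + 2) k * (n + 2 - k) ^ 4 / (n + 2) ^ 4 := by
    rw [eq_div_iff (by positivity)]
    exact_mod_cast (franelTerm_succ_left (n + 1) k).symm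
  have h₀ : franelTerm n k = franelTerm (n + 1) k * (n + 1 - k) ^ 4 / (n + 1) ^ 4 := by
    rw [eq_div_iff (by positivity)]
    exact (franelTerm_succ_left n k).symm
  have h₂ :
      franelTerm (n + 2) (k + 1) = franelTerm (n + 2) k * (n + 2 - k) ^ 4 / (k + 1) ^ 4 := by
    rw [eq_div_iff (by positivity)]
    exact_mod_cast franelTerm_succ_right (n + 2) k
  rw [franelCert, franelCert, h₀, h₁, h₂]
  push_cast
  field_simp
  ring

def wTerm (n k : ℕ) : ℚ :=
  (-1) ^ (n + k) * n.choose k * (n + k).choose k * k.centralBinom * (n - k).centralBinom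

theorem wTerm_eq_zero_of_lt {n k : ℕ} (h : n < k) : wTerm n k = 0 := by
  simp [wTerm, Nat.choose_eq_zero_of_lt h]

theorem cast_succ_mul_centralBinom_succ (n : ℕ) :
    ((n : ℚ) + 1) * (n + 1).centralBinom = 2 * (2 * n + 1) * n.centralBinom := by
  exact_mod_cast Nat.succ_mul_centralBinom_succ n

theorem wTerm_succ_left (n k : ℕ) :
    wTerm (n + 1) k * (n + 1 - k) ^ 2 = -2 * (n + k + 1) * (2 * (n - k) + 1) * wTerm n k := by
  rcases le_or_gt k n with hkn | hnk
  · obtain ⟨m, rfl⟩ := Nat.exists_eq_add_of_le hkn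
    have h₁ : ((k + m + 1).choose k : ℚ) = (k + m).choose k * (k + m + 1) / (m + 1) := by
      rw [eq_div_iff (by positivity)]
      have := cast_choose_succ_mul_sub (R := ℚ) (k + m) k
      push_cast at this
      linear_combination this
    have h₂ : ((k + m + 1 + k).choose k : ℚ) =
        (k + m + k).choose k * (k + m + k + 1) / (k + m + 1) := by
      rw [eq_div_iff (by positivity), Nat.add_right_comm]
      have := cast_choose_succ_mul_sub (R := ℚ) (k + m + k) k
      push_cast at this
      linear_combination this
    have h₃ : ((m + 1).centralBinom : ℚ) = 2 * (2 * m + 1) * m.centralBinom / (m + 1) := by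
      rw [eq_div_iff (by positivity), mul_comm]
      exact cast_succ_mul_centralBinom_succ m
    simp only [wTerm, Nat.add_sub_cancel_left, show k + m + 1 - k = m + 1 by omega,
      h₁, h₂, h₃, pow_succ]
    push_cast
    field_simp
    ring
  · rcases (Nat.succ_le_of_lt hnk).eq_or_lt with rfl | hnk'
    · simp [wTerm_eq_zero_of_lt hnk]
    · simp [wTerm_eq_zero_of_lt hnk, wTerm_eq_zero_of_lt hnk']

theorem wTerm_succ_right (n k : ℕ) :
    wTerm n (k + 1) * (k + 1) ^ 3 * (2 * (n - k) - 1) =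
      -(n - k) ^ 2 * (n + k + 1) * (2 * k + 1) * wTerm n k := by
  rcases lt_or_ge k n with hkn | hnk
  · obtain ⟨m, rfl⟩ := Nat.exists_eq_add_of_lt hkn
    have h₁ : ((k + m + 1).choose (k + 1) : ℚ) = (k + m + 1).choose k * (m + 1) / (k + 1) := by
      rw [eq_div_iff (by positivity)]
      have := cast_choose_succ_right_mul (R := ℚ) (k + m + 1) k
      push_cast at this
      linear_combination this
    have h₂ : ((k + m + 1 + (k + 1)).choose (k + 1) : ℚ) =
        (k + m + 1 + k).choose k * (k + m + 1 + k + 1) / (k + 1) := by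
      rw [eq_div_iff (by positivity), ← add_assoc]
      exact_mod_cast (Nat.add_one_mul_choose_eq (k + m + 1 + k) k).symm.trans (mul_comm _ _)
    have h₃ : ((k + 1).centralBinom : ℚ) = 2 * (2 * k + 1) * k.centralBinom / (k + 1) := by
      rw [eq_div_iff (by positivity), mul_comm]
      exact cast_succ_mul_centralBinom_succ k
    have h₄ : (m.centralBinom : ℚ) = (m + 1) * (m + 1).centralBinom / (2 * (2 * m + 1)) := by
      rw [eq_div_iff (by positivity), mul_comm]
      exact (cast_succ_mul_centralBinom_succ m).symm
    simp only [wTerm, show k + m + 1 - (k + 1) = m by omega, show k + m + 1 - k = m + 1 by omega,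
      h₁, h₂, h₃, h₄, pow_succ]
    push_cast
    field_simp
    ring
  · rcases hnk.eq_or_lt with rfl | hnk'
    · simp [wTerm_eq_zero_of_lt (Nat.lt_succ_self n)]
    · simp [wTerm_eq_zero_of_lt hnk', wTerm_eq_zero_of_lt (Nat.lt_succ_of_lt hnk')]

/- Dividing `wTerm n k` by `(n + 1 - k)^2 (n + 2 - k)^2` instead would break down at `k = n + 1`,
where `wTerm n k = 0`; in terms of `wTerm (n + 2) k` the denominator has no integer zeros. -/
noncomputable def wCert (n k : ℕ) : ℚ :=
  let x : ℚ := n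
  let y : ℚ := k
  (y ^ 3 * -(328 + 1276 * x + 1628 * x ^ 2 + 856 * x ^ 3 + 160 * x ^ 4)
    + y ^ 4 * (980 + 2296 * x + 1720 * x ^ 2 + 416 * x ^ 3)
    + y ^ 5 * -(716 + 1000 * x + 352 * x ^ 2)
    + y ^ 6 * (136 + 96 * x))
  * wTerm (n + 2) k / (4 * (x + y + 1) * (x + y + 2) * (2 * (x - y) + 1) * (2 * (x - y) + 3))

theorem wTerm_telescoping (n k : ℕ) :
    ((n : ℚ) + 2) ^ 3 * wTerm (n + 2) k
      - 2 * (2 * n + 3) * (3 * n ^ 2 + 9 * n + 7) * wTerm (n + 1) k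
      - 4 * (n + 1) * (4 * n + 3) * (4 * n + 5) * wTerm n k
    = wCert n (k + 1) - wCert n k := by
  have hodd (a b : ℕ) (c : ℤ) : 2 * ((a : ℚ) - b) + (2 * c + 1) ≠ 0 := by
    exact_mod_cast (by omega : 2 * ((a : ℤ) - b) + (2 * c + 1) ≠ 0)
  have hd₀ : 2 * ((n : ℚ) - k) + 1 ≠ 0 :=
    fun h => hodd n k 0 (by push_cast; linear_combination h)
  have hd₁ : 2 * ((n : ℚ) - k) + 3 ≠ 0 :=
    fun h => hodd n k 1 (by push_cast; linear_combination h)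
  have hd₂ : 2 * ((n : ℚ) - (k + 1)) + 1 ≠ 0 :=
    fun h => hodd n k (-1) (by push_cast; linear_combination h)
  have hd₃ : 2 * ((n : ℚ) - (k + 1)) + 3 ≠ 0 :=
    fun h => hodd n k 0 (by push_cast; linear_combination h)
  have h₁ : wTerm (n + 1) k =
      wTerm (n + 2) k * (n + 2 - k) ^ 2 / (-2 * (n + k + 2) * (2 * (n - k) + 3)) := by
    rw [eq_div_iff (by positivity)]
    have := wTerm_succ_left (n + 1) k
    push_cast at this
    linear_combination -this
  have h₀ : wTerm n k =
      wTerm (n + 1) k * (n + 1 - k) ^ 2 / (-2 * (n + k + 1) * (2 * (n - k) + 1)) := by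
    rw [eq_div_iff (by positivity)]
    have := wTerm_succ_left n k
    linear_combination -this
  have h₂ : wTerm (n + 2) (k + 1) = -(n + 2 - k) ^ 2 * (n + k + 3) * (2 * k + 1) * wTerm (n + 2) k
      / ((k + 1) ^ 3 * (2 * (n - k) + 3)) := by
    rw [eq_div_iff (by positivity)]
    have := wTerm_succ_right (n + 2) k
    push_cast at this
    linear_combination this
  rw [wCert, wCert, h₀, h₁, h₂]
  push_cast
  field_simp
  ring

theorem sum_franelTerm_recurrence (n : ℕ) :
    ((n : ℚ) + 2) ^ 3 * ∑ k ∈ range (n + 3), franelTerm (n + 2) k =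
      2 * (2 * n + 3) * (3 * n ^ 2 + 9 * n + 7) * ∑ k ∈ range (n + 2), franelTerm (n + 1) k
        + 4 * (n + 1) * (4 * n + 3) * (4 * n + 5) * ∑ k ∈ range (n + 1), franelTerm n k :=
  sum_recurrence_of_telescoping franelTerm (franelCert n) _ _ _ n
    (fun _ _ => franelTerm_eq_zero_of_lt) (by simp [franelCert])
    (by simp [franelCert, franelTerm_eq_zero_of_lt (by omega : n + 2 < n + 3)])
    (franelTerm_telescoping n)

theorem sum_wTerm_recurrence (n : ℕ) :
    ((n : ℚ) + 2) ^ 3 * ∑ k ∈ range (n + 3), wTerm (n + 2) k =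
      2 * (2 * n + 3) * (3 * n ^ 2 + 9 * n + 7) * ∑ k ∈ range (n + 2), wTerm (n + 1) k
        + 4 * (n + 1) * (4 * n + 3) * (4 * n + 5) * ∑ k ∈ range (n + 1), wTerm n k :=
  sum_recurrence_of_telescoping wTerm (wCert n) _ _ _ n
    (fun _ _ => wTerm_eq_zero_of_lt) (by simp [wCert])
    (by simp [wCert, wTerm_eq_zero_of_lt (by omega : n + 2 < n + 3)])
    (wTerm_telescoping n)

theorem sum_wTerm_eq_sum_franelTerm (n : ℕ) :
    ∑ k ∈ range (n + 1), wTerm n k = ∑ k ∈ range (n + 1), franelTerm n k := by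
  refine congrFun (eq_of_recurrence (a := fun n => ∑ k ∈ range (n + 1), wTerm n k)
    (b := fun n => ∑ k ∈ range (n + 1), franelTerm n k) (fun n : ℕ => ((n : ℚ) + 2) ^ 3)
    (fun n : ℕ => 2 * (2 * (n : ℚ) + 3) * (3 * n ^ 2 + 9 * n + 7))
    (fun n : ℕ => 4 * ((n : ℚ) + 1) * (4 * n + 3) * (4 * n + 5)) (fun n => by positivity)
    sum_wTerm_recurrence sum_franelTerm_recurrence ?_ ?_) n
  · simp [wTerm, franelTerm]
  · simp [wTerm, franelTerm, sum_range_succ, Nat.centralBinom_eq_two_mul_choose]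
    norm_num

theorem W_at_neg_one_eq_franel4 (n : ℕ) :
    (-1 : ℤ) ^ n *
      ∑ k ∈ Finset.range (n + 1),
        (Nat.choose n k * Nat.choose (n + k) k * Nat.choose (2 * k) k *
          Nat.choose (2 * (n - k)) (n - k) : ℤ) * (-1) ^ k =
    ∑ k ∈ Finset.range (n + 1), (Nat.choose n k : ℤ) ^ 4 := by
  have h := sum_wTerm_eq_sum_franelTerm n
  simp only [wTerm, franelTerm, Nat.centralBinom_eq_two_mul_choose] at h
  rw [mul_sum]
  refine Int.cast_injective (α := ℚ) ?_
  push_cast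
  rw [← h]
  refine sum_congr rfl fun k _ => ?_
  rw [pow_add]
  ring
end

section
/- The Franel numbers of order four f_n^{(4)} = ∑_{k=0}^n C(n,k)^4 satisfy the recurrence (n+2)^3 · f_{n+2}^{(4)} = 4(n+1)(4n+3)(4n+5) · f_n^{(4)} + 2(2n+3)(3n^2+9n+7) · f_{n+1}^{(4)} for all natural numbers n. -/
/-! Creative telescoping (Zeilberger). With `F n k = C(n,k)^4` there is a rational function
`R n k` such that, for `G n k = R n k * C(n+2,k)^4`, every `k` satisfies
`(n+2)^3 F (n+2) k - 4(n+1)(4n+3)(4n+5) F n k - 2(2n+3)(3n^2+9n+7) F (n+1) k = G n (k+1) - G n k`.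
Summing over `k ≤ n + 2` the right-hand side telescopes to `G n (n+3) - G n 0 = 0`. -/

open Finset

namespace Nat

lemma cast_choose_succ_right_mul {R : Type*} [CommRing R] (m k : ℕ) :
    (m.choose (k + 1) : R) * (k + 1) = m.choose k * (m - k) := by
  rcases le_or_gt k m with hk | hk
  · have h := congrArg (Nat.cast (R := R)) (choose_succ_right_eq m k)
    push_cast [Nat.cast_sub hk] at h
    exact h
  · simp [choose_eq_zero_of_lt hk, choose_eq_zero_of_lt (hk.trans (lt_succ_self k))]

lemma cast_succ_choose_mul {R : Type*} [CommRing R] (m k : ℕ) :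
    ((m + 1).choose k : R) * (m + 1 - k) = m.choose k * (m + 1) := by
  rcases le_or_gt k (m + 1) with hk | hk
  · have h := congrArg (Nat.cast (R := R)) (choose_mul_succ_eq m k)
    push_cast [Nat.cast_sub hk] at h
    exact h.symm
  · simp [choose_eq_zero_of_lt hk, choose_eq_zero_of_lt (lt_of_succ_lt hk)]

lemma sum_range_choose_pow_of_lt {R : Type*} [Semiring R] {n m p : ℕ} (hnm : n < m)
    (hp : p ≠ 0) :
    ∑ k ∈ range m, (n.choose k : R) ^ p = ∑ k ∈ range (n + 1), (n.choose k : R) ^ p := by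
  refine (sum_subset (range_subset_range.2 hnm) fun k _ hkn => ?_).symm
  rw [choose_eq_zero_of_lt (by simpa using hkn), Nat.cast_zero, zero_pow hp]

end Nat

namespace Franel4

-- Zeilberger's certificate, as produced by his algorithm for the summand `C(n,k)^4`.
def certificate (n k : ℚ) : ℚ :=
  k ^ 4 * (- 1080 - 5380 * n - 11330 * n^2 - 13075 * n^3 - 8930 * n^4
  - 3610 * n^5 - 800 * n^6 - 75 * n^7 + 2256 * k + 9776 * n * k
  + 17412 * n^2 * k + 16312 * n^3 * k + 8476 * n^4 * k + 2316 * n^5 * k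
  + 260 * n^6 * k - 1980 * k^2 - 7302 * n * k^2 - 10620 * n^2 * k^2
  - 7612 * n^3 * k^2 - 2688 * n^4 * k^2 - 374 * n^5 * k^2 + 900 * k^3
  + 2744 * n * k^3 + 3088 * n^2 * k^3 + 1520 * n^3 * k^3 + 276 * n^4 * k^3
  - 210 * k^4 - 508 * n * k^4 - 402 * n^2 * k^4 - 104 * n^3 * k^4
  + 20 * k^5 + 36 * n * k^5 + 16 * n^2 * k^5) / ((n + 1) ^ 4 * (n + 2) ^ 4)

def companion (n k : ℕ) : ℚ := certificate n k * ((n + 2).choose k : ℚ) ^ 4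

lemma companion_zero (n : ℕ) : companion n 0 = 0 := by
  simp [companion, certificate]

lemma companion_of_lt {n k : ℕ} (h : n + 2 < k) : companion n k = 0 := by
  simp [companion, Nat.choose_eq_zero_of_lt h]

lemma telescoping_identity (n k : ℕ) :
    (n + 2) ^ 3 * ((n + 2).choose k : ℚ) ^ 4
      - 4 * (n + 1) * (4 * n + 3) * (4 * n + 5) * (n.choose k : ℚ) ^ 4
      - 2 * (2 * n + 3) * (3 * n ^ 2 + 9 * n + 7) * ((n + 1).choose k : ℚ) ^ 4
      = companion n (k + 1) - companion n k := by
  -- Every binomial coefficient involved is a rational multiple of `C(n+2,k)`, valid for all `k`,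
  -- so the identity becomes one between rational functions of `n` and `k`.
  have h1 : ((n + 2).choose (k + 1) : ℚ) = (n + 2).choose k * (n + 2 - k) / (k + 1) := by
    rw [eq_div_iff (by positivity), Nat.cast_choose_succ_right_mul]
    push_cast
    ring
  have h2 : ((n + 1).choose k : ℚ) = (n + 2).choose k * (n + 2 - k) / (n + 2) := by
    rw [eq_div_iff (by positivity)]
    linear_combination (norm := (push_cast; ring)) -Nat.cast_succ_choose_mul (R := ℚ) (n + 1) k
  have h3 : (n.choose k : ℚ) = (n + 1).choose k * (n + 1 - k) / (n + 1) := by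
    rw [eq_div_iff (by positivity)]
    exact (Nat.cast_succ_choose_mul n k).symm
  rw [h3, h2, companion, companion, h1, certificate, certificate]
  field_simp
  push_cast
  ring

end Franel4

open Franel4 in
theorem franel4_recurrence (n : ℕ) :
    (n + 2) ^ 3 * ∑ k ∈ Finset.range (n + 3), (Nat.choose (n + 2) k) ^ 4 =
      4 * (n + 1) * (4 * n + 3) * (4 * n + 5) *
        ∑ k ∈ Finset.range (n + 1), (Nat.choose n k) ^ 4 +
      2 * (2 * n + 3) * (3 * n ^ 2 + 9 * n + 7) *
        ∑ k ∈ Finset.range (n + 2), (Nat.choose (n + 1) k) ^ 4 := by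
  have telescope := sum_range_sub (companion n) (n + 3)
  rw [companion_of_lt (Nat.lt_succ_self _), companion_zero, sub_zero,
    ← sum_congr rfl fun k _ => telescoping_identity n k, sum_sub_distrib, sum_sub_distrib,
    ← mul_sum, ← mul_sum, ← mul_sum,
    Nat.sum_range_choose_pow_of_lt (n := n) (by omega) four_ne_zero,
    Nat.sum_range_choose_pow_of_lt (n := n + 1) (by omega) four_ne_zero] at telescope
  rw [← Nat.cast_inj (R := ℚ)]
  push_cast
  linear_combination telescope
end
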